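/- For all positive integers $k$ and $N$, there exist finite simple connected graphs $G$ and $H$ such that $H$ is a proper subgraph of $G$ and $\dim_k(H) > N \cdot \dim_k(G)$. -/

import Mathlib

open SimpleGraph

/-- The distance-`k` truncated distance `dₖ(x,y) = min{d(x,y), k+1}`, valued in `ℕ∞`
(so unreachable pairs have distance `⊤`, which is truncated to `k+1`). -/
noncomputable def distK {V : Type*} (G : SimpleGraph V) (k : ℕ) (x y : V) : ℕ∞ :=
  min (G.edist x y) (k + 1)

/-- `S` is a distance-`k` resolving set of `G`. -/
def IsDistKResolving {V : Type*} (G : SimpleGraph V) (k : ℕ) (S : Set V) : Prop :=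
  ∀ x y : V, x ≠ y → ∃ z ∈ S, distK G k x z ≠ distK G k y z

/-- The distance-`k` dimension of a finite graph `G`: the minimum cardinality of a
distance-`k` resolving set of `G`. -/
noncomputable def dimK {V : Type*} [Fintype V] (G : SimpleGraph V) (k : ℕ) : ℕ :=
  sInf { m | ∃ S : Finset V, IsDistKResolving G k ↑S ∧ S.card = m }

/-!
Take a star with centre `0` and leaves `1, …, r`, and add `t` landmarks, all joined to the centre,
with leaf `x` joined to the `j`-th landmark iff bit `j` of `x` is set. For `k ≥ 1` a truncated
distance equals `1` exactly for adjacent vertices, so two leaves are resolved by any landmark joined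
to exactly one of them; as distinct leaves have distinct binary codes, the centre and the landmarks
resolve this graph `G`, and `dimₖ(G) ≤ t + 1`. Deleting the landmarks leaves the star `H`, whose
leaves all have the same neighbourhood and hence the same distance to every third vertex: a
resolving set misses at most one of them, so `dimₖ(H) ≥ r - 1`. Taking `r` exponential in `t`
makes `r - 1` exceed `N (t + 1)`.
-/

namespace SimpleGraph

variable {V : Type*} {G : SimpleGraph V}

lemma edist_le_edist_of_neighborSet_subset {a b z : V} (h : G.neighborSet a ⊆ G.neighborSet b)
    (hza : z ≠ a) : G.edist b z ≤ G.edist a z := by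
  by_cases hr : G.Reachable a z
  · obtain ⟨p, hp⟩ := hr.exists_walk_length_eq_edist
    cases p with
    | nil => exact absurd rfl hza
    | cons hadj q =>
      calc G.edist b z ≤ (Walk.cons (h hadj) q).length := edist_le _
        _ = G.edist a z := by rw [← hp]; rfl
  · rw [edist_eq_top_of_not_reachable hr]
    exact le_top

lemma edist_eq_of_neighborSet_eq {a b z : V} (h : G.neighborSet a = G.neighborSet b)
    (hza : z ≠ a) (hzb : z ≠ b) : G.edist a z = G.edist b z :=
  le_antisymm (edist_le_edist_of_neighborSet_subset h.ge hzb)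
    (edist_le_edist_of_neighborSet_subset h.le hza)

lemma neighborSet_starGraph_of_ne {c v : V} (hv : v ≠ c) : (starGraph c).neighborSet v = {c} := by
  ext w
  rw [mem_neighborSet, starGraph_adj, Set.mem_singleton_iff]
  grind

end SimpleGraph

lemma Nat.exists_testBit_ne_of_lt_two_pow {x y t : ℕ} (hxy : x ≠ y) (hx : x < 2 ^ t)
    (hy : y < 2 ^ t) : ∃ j < t, x.testBit j ≠ y.testBit j := by
  by_contra! h
  refine hxy (Nat.eq_of_testBit_eq fun j => ?_)
  by_cases hj : j < t
  · exact h j hj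
  · have ht : 2 ^ t ≤ 2 ^ j := Nat.pow_le_pow_right two_pos (not_lt.mp hj)
    rw [Nat.testBit_eq_false_of_lt (hx.trans_le ht), Nat.testBit_eq_false_of_lt (hy.trans_le ht)]

section DistK

variable {V : Type*} {G : SimpleGraph V} {k : ℕ} {x y : V}

lemma distK_eq_zero_iff : distK G k x y = 0 ↔ x = y := by
  simp [distK, edist_eq_zero_iff]

lemma distK_eq_one_iff (hk : 1 ≤ k) : distK G k x y = 1 ↔ G.Adj x y := by
  have h2 : (1 : ℕ∞) < k + 1 := by exact_mod_cast Nat.lt_succ_of_le hk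
  rw [distK, ← edist_eq_one_iff_adj, min_eq_iff]
  constructor
  · rintro (⟨h, -⟩ | ⟨h, -⟩)
    exacts [h, absurd h h2.ne']
  · exact fun h => Or.inl ⟨h, h ▸ h2.le⟩

lemma distK_eq_of_neighborSet_eq {a b z : V} (h : G.neighborSet a = G.neighborSet b)
    (hza : z ≠ a) (hzb : z ≠ b) : distK G k a z = distK G k b z := by
  rw [distK, distK, edist_eq_of_neighborSet_eq h hza hzb]

lemma exists_distK_ne_of_mem {S : Set V} (hx : x ∈ S) (hxy : x ≠ y) :
    ∃ z ∈ S, distK G k x z ≠ distK G k y z := by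
  refine ⟨x, hx, fun h => hxy ?_⟩
  rw [eq_comm, ← distK_eq_zero_iff (G := G) (k := k), ← h, distK_eq_zero_iff]

lemma isDistKResolving_univ : IsDistKResolving G k Set.univ :=
  fun _ _ hxy => exists_distK_ne_of_mem trivial hxy

lemma IsDistKResolving.of_forall_exists_adj_iff_not_adj (hk : 1 ≤ k) {S : Set V}
    (h : ∀ x ∉ S, ∀ y ∉ S, x ≠ y → ∃ z ∈ S, ¬(G.Adj x z ↔ G.Adj y z)) :
    IsDistKResolving G k S := by
  intro x y hxy
  by_cases hx : x ∈ S
  · exact exists_distK_ne_of_mem hx hxy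
  by_cases hy : y ∈ S
  · obtain ⟨z, hz, h⟩ := exists_distK_ne_of_mem (G := G) (k := k) hy hxy.symm
    exact ⟨z, hz, h.symm⟩
  obtain ⟨z, hz, hadj⟩ := h x hx y hy hxy
  refine ⟨z, hz, fun h => hadj ?_⟩
  rw [← distK_eq_one_iff hk, ← distK_eq_one_iff hk, h]

lemma IsDistKResolving.mem_or_mem_of_neighborSet_eq {S : Set V} (hS : IsDistKResolving G k S)
    {a b : V} (hab : a ≠ b) (h : G.neighborSet a = G.neighborSet b) : a ∈ S ∨ b ∈ S := by
  by_contra! hn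
  obtain ⟨z, hz, hne⟩ := hS a b hab
  exact hne (distK_eq_of_neighborSet_eq h (by rintro rfl; exact hn.1 hz)
    (by rintro rfl; exact hn.2 hz))

lemma IsDistKResolving.card_le_card_add_one [DecidableEq V] {S T : Finset V}
    (hS : IsDistKResolving G k S) (hT : ∀ a ∈ T, ∀ b ∈ T, G.neighborSet a = G.neighborSet b) :
    T.card ≤ S.card + 1 := by
  have hTS : (T \ S).card ≤ 1 := Finset.card_le_one.mpr fun a ha b hb => by
    rw [Finset.mem_sdiff] at ha hb
    by_contra hab
    rcases hS.mem_or_mem_of_neighborSet_eq hab (hT a ha.1 b hb.1) with h | h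
    exacts [ha.2 h, hb.2 h]
  have := Finset.card_le_card_sdiff_add_card (s := T) (t := S)
  omega

variable [Fintype V]

lemma dimK_le_card {S : Finset V} (hS : IsDistKResolving G k S) : dimK G k ≤ S.card :=
  Nat.sInf_le ⟨S, hS, rfl⟩

lemma exists_isDistKResolving_card_eq_dimK :
    ∃ S : Finset V, IsDistKResolving G k S ∧ S.card = dimK G k :=
  Nat.sInf_mem (s := {m | ∃ S : Finset V, IsDistKResolving G k ↑S ∧ S.card = m})
    ⟨_, Finset.univ, by simpa using isDistKResolving_univ, rfl⟩

lemma card_sub_two_le_dimK_starGraph (c : V) : Fintype.card V - 2 ≤ dimK (starGraph c) k := by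
  classical
  obtain ⟨S, hS, hcard⟩ := exists_isDistKResolving_card_eq_dimK (G := starGraph c) (k := k)
  have := hS.card_le_card_add_one (T := Finset.univ.erase c) fun a ha b hb => by
    rw [neighborSet_starGraph_of_ne (Finset.ne_of_mem_erase ha),
      neighborSet_starGraph_of_ne (Finset.ne_of_mem_erase hb)]
  rw [Finset.card_erase_of_mem (Finset.mem_univ c), Finset.card_univ] at this
  omega

end DistK

/-- Vertex `0` is the centre, `1, …, r` are the leaves and `r + 1 + j` (`j < t`) is the `j`-th
landmark; leaf `x` is joined to the `j`-th landmark iff bit `j` of `x` is set. -/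
def codeGraph (r t : ℕ) : SimpleGraph (Fin (r + t + 1)) :=
  SimpleGraph.fromRel fun x y =>
    x.val = 0 ∨ (x.val ≤ r ∧ r < y.val ∧ x.val.testBit (y.val - (r + 1)))

def starVertices (r t : ℕ) : Finset (Fin (r + t + 1)) :=
  Finset.Iic ⟨r, by omega⟩

section

variable {r t : ℕ}

lemma mem_starVertices {x : Fin (r + t + 1)} : x ∈ starVertices r t ↔ x.val ≤ r := by
  rw [starVertices, Finset.mem_Iic, Fin.le_def]

def starVertices.centre : starVertices r t :=
  ⟨0, mem_starVertices.mpr (Nat.zero_le r)⟩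

lemma card_starVertices : (starVertices r t).card = r + 1 := by
  simp [starVertices]

end

namespace codeGraph

variable {r t : ℕ}

lemma isUniversal_zero : (codeGraph r t).IsUniversal 0 :=
  fun _ hx => (fromRel_adj _ _ _).mpr ⟨hx, Or.inl (Or.inl rfl)⟩

lemma adj_landmark_iff {x z : Fin (r + t + 1)} (hx₀ : x.val ≠ 0) (hx : x.val ≤ r)
    (hz : r < z.val) :
    (codeGraph r t).Adj x z ↔ x.val.testBit (z.val - (r + 1)) := by
  rw [codeGraph, fromRel_adj]
  constructor
  · rintro ⟨-, (h | ⟨-, -, h⟩) | (h | ⟨h, -⟩)⟩ <;> first | exact h | omega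
  · exact fun h => ⟨fun e => by omega, Or.inl (Or.inr ⟨hx, hz, h⟩)⟩

lemma adj_of_starGraph_adj {a b : starVertices r t}
    (h : (starGraph starVertices.centre).Adj a b) :
    (codeGraph r t).Adj a b := by
  obtain ⟨hab, rfl | rfl⟩ := starGraph_adj.mp h
  · exact isUniversal_zero fun e => hab (Subtype.ext e)
  · exact (isUniversal_zero fun e => hab (Subtype.ext e.symm)).symm

lemma isDistKResolving_insert_zero_compl_starVertices {k : ℕ} (hk : 1 ≤ k) (hr : r < 2 ^ t) :
    IsDistKResolving (codeGraph r t) k ↑(insert 0 (starVertices r t)ᶜ) := by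
  have hleaf : ∀ x ∉ insert 0 (starVertices r t)ᶜ, x.val ≠ 0 ∧ x.val ≤ r := fun x hx => by
    simp only [Finset.mem_insert, Finset.mem_compl, mem_starVertices, not_or, not_not] at hx
    exact ⟨fun h => hx.1 (Fin.ext h), hx.2⟩
  refine .of_forall_exists_adj_iff_not_adj hk fun x hx y hy hxy => ?_
  obtain ⟨hx₀, hxr⟩ := hleaf x hx
  obtain ⟨hy₀, hyr⟩ := hleaf y hy
  obtain ⟨j, hj, hbit⟩ := Nat.exists_testBit_ne_of_lt_two_pow (t := t) (Fin.val_ne_of_ne hxy)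
    (by omega) (by omega)
  let z : Fin (r + t + 1) := ⟨r + 1 + j, by omega⟩
  have hz : r < z.val := Nat.lt_add_right j r.lt_succ_self
  refine ⟨z, by simp [mem_starVertices, hz], ?_⟩
  rwa [adj_landmark_iff hx₀ hxr hz, adj_landmark_iff hy₀ hyr hz, Nat.add_sub_cancel_left,
    Bool.coe_iff_coe]

lemma dimK_le {k : ℕ} (hk : 1 ≤ k) (hr : r < 2 ^ t) : dimK (codeGraph r t) k ≤ t + 1 := by
  refine (dimK_le_card (isDistKResolving_insert_zero_compl_starVertices hk hr)).trans ?_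
  rw [Finset.card_insert_of_notMem (by simp [mem_starVertices]), Finset.card_compl,
    card_starVertices, Fintype.card_fin]
  omega

lemma connected : (codeGraph r t).Connected :=
  .of_isUniversal isUniversal_zero

end codeGraph

lemma exists_mul_add_two_lt_two_pow (N : ℕ) : ∃ t, N * (t + 1) + 2 < 2 ^ t := by
  refine ⟨2 * N + 3, ?_⟩
  have hN : N < 2 ^ N := Nat.lt_two_pow_self
  have h : 2 ^ (2 * N + 3) = 8 * (2 ^ N * 2 ^ N) := by ring
  rw [h]
  nlinarith

theorem stmt2_general (k N : ℕ) (hk : 1 ≤ k) :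
    ∃ (n : ℕ) (G : SimpleGraph (Fin n)) (s : Finset (Fin n))
      (H : SimpleGraph {x : Fin n // x ∈ s}),
      G.Connected ∧ H.Connected ∧
      (∀ a b : {x : Fin n // x ∈ s}, H.Adj a b → G.Adj (↑a) (↑b)) ∧
      (s ≠ Finset.univ ∨ ∃ a b : {x : Fin n // x ∈ s}, G.Adj (↑a) (↑b) ∧ ¬ H.Adj a b) ∧
      N * dimK G k < dimK H k := by
  obtain ⟨t, ht⟩ := exists_mul_add_two_lt_two_pow N
  set r := N * (t + 1) + 2
  have hr : r < 2 ^ t := ht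
  have ht₀ : t ≠ 0 := by rintro rfl; omega
  refine ⟨r + t + 1, codeGraph r t, starVertices r t, starGraph starVertices.centre,
    codeGraph.connected, connected_starGraph _, fun _ _ => codeGraph.adj_of_starGraph_adj,
    Or.inl fun h => ?_, ?_⟩
  · have := mem_starVertices.mp (h ▸ Finset.mem_univ (⟨r + 1, by omega⟩ : Fin (r + t + 1)))
    simp at this
  · calc N * dimK (codeGraph r t) k
        ≤ N * (t + 1) := Nat.mul_le_mul_left N (codeGraph.dimK_le hk hr)
      _ < r - 1 := by omega
      _ = Fintype.card (starVertices r t) - 2 := by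
        rw [Fintype.card_coe, card_starVertices]; omega
      _ ≤ dimK (starGraph starVertices.centre) k := card_sub_two_le_dimK_starGraph _

/-- For all positive integers `k` and `N`, there exist connected graphs `G` and `H`
such that `H` is a proper subgraph of `G` and `dimₖ(H) > N * dimₖ(G)`. -/
theorem stmt2 (k N : ℕ) (hk : 1 ≤ k) (hN : 1 ≤ N) :
    ∃ (n : ℕ) (G : SimpleGraph (Fin n)) (s : Finset (Fin n))
      (H : SimpleGraph {x : Fin n // x ∈ s}),
      G.Connected ∧ H.Connected ∧
      (∀ a b : {x : Fin n // x ∈ s}, H.Adj a b → G.Adj (↑a) (↑b)) ∧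
      (s ≠ Finset.univ ∨ ∃ a b : {x : Fin n // x ∈ s}, G.Adj (↑a) (↑b) ∧ ¬ H.Adj a b) ∧
      N * dimK G k < dimK H k :=
  stmt2_general k N hk
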